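/- arXiv:1011.1607 — 2 statements merged into one kernel-verified Lean document; each statement's English description precedes it below -/
import Mathlib

section
/- Conditioning perturbation bound for directed information: for any joint pmf on (X^N, Y^N, S) with S taking values in a finite set 𝒮, |I(X^N → Y^N) − I(X^N → Y^N | S)| ≤ H(S) ≤ log |𝒮|, where I(X^N → Y^N | S) := ∑_{i=1}^N I(X^i; Y_i | Y^{i-1}, S). -/
/-!
Write `H(k, m) = H(S | X^k, Y^m)`. Per time step, the difference of the summands is
`I(S; Y_{i+1} | Y^i) - I(S; Y_{i+1} | X^{i+1}, Y^i)`, a combination of four values of `H`, so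
`I(X^N → Y^N) - I(X^N → Y^N | S) = I(S; Y^N) - ∑ᵢ I(S; Y_{i+1} | X^{i+1}, Y^i)`.
Since conditioning does not increase entropy, both `I(S; Y^N)` and the sum, which by the chain
rule is at most `I(S; X^N, Y^N)`, lie in `[0, H(S)]`. The bound `H(S) ≤ log |𝒮|` is Gibbs'
inequality against the uniform distribution, just as monotonicity of `H` is Gibbs' inequality
for the conditional laws.
-/

open Finset

noncomputable def prefA {X Y S : Type*} [Fintype X] [Fintype Y] [Fintype S]
    [DecidableEq X] [DecidableEq Y] {N : ℕ}
    (P : (Fin N → X) × (Fin N → Y) × S → ℝ) (k m : ℕ) (x : Fin N → X) (y : Fin N → Y) : ℝ :=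
  ∑ t : (Fin N → X) × (Fin N → Y) × S,
    if (∀ j : Fin N, (j : ℕ) < k → t.1 j = x j) ∧ (∀ j : Fin N, (j : ℕ) < m → t.2.1 j = y j)
    then P t else 0

noncomputable def prefB {X Y S : Type*} [Fintype X] [Fintype Y] [Fintype S]
    [DecidableEq X] [DecidableEq Y] [DecidableEq S] {N : ℕ}
    (P : (Fin N → X) × (Fin N → Y) × S → ℝ) (k m : ℕ) (x : Fin N → X) (y : Fin N → Y)
    (s : S) : ℝ :=
  ∑ t : (Fin N → X) × (Fin N → Y) × S,
    if (∀ j : Fin N, (j : ℕ) < k → t.1 j = x j) ∧ (∀ j : Fin N, (j : ℕ) < m → t.2.1 j = y j)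
       ∧ t.2.2 = s
    then P t else 0

open Real

section Law

variable {T C S : Type*} [Fintype T] [DecidableEq C] [DecidableEq S] (P : T → ℝ)

noncomputable def lawOf (F : T → C) (c : C) : ℝ :=
  ∑ t, if F t = c then P t else 0

noncomputable def entropyOf [Fintype S] (g : T → S) : ℝ :=
  -∑ s, lawOf P g s * log (lawOf P g s)

/-- `P(g = g t | F = F t)`. -/
noncomputable def condProb (F : T → C) (g : T → S) (t : T) : ℝ :=
  lawOf P (fun u => (F u, g u)) (F t, g t) / lawOf P F (F t)

noncomputable def condEntropy (F : T → C) (g : T → S) : ℝ :=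
  -∑ t, P t * log (condProb P F g t)

variable {P}

lemma lawOf_nonneg (hP : ∀ t, 0 ≤ P t) (F : T → C) (c : C) : 0 ≤ lawOf P F c :=
  sum_nonneg fun u _ => by split_ifs <;> simp [hP u]

lemma le_lawOf_apply (hP : ∀ t, 0 ≤ P t) (F : T → C) (t : T) : P t ≤ lawOf P F (F t) := by
  simpa [lawOf] using single_le_sum (f := fun u => if F u = F t then P u else 0)
    (fun u _ => by split_ifs <;> simp [hP u]) (mem_univ t)

lemma lawOf_prod_mk_le (hP : ∀ t, 0 ≤ P t) (F : T → C) (g : T → S) (c : C) (s : S) :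
    lawOf P (fun u => (F u, g u)) (c, s) ≤ lawOf P F c :=
  sum_le_sum fun u _ => by
    by_cases h : F u = c <;> by_cases h' : g u = s <;> simp [h, h', hP u]

variable (P)

lemma sum_mul_comp_eq_sum_lawOf [Fintype C] (F : T → C) (φ : C → ℝ) :
    ∑ t, P t * φ (F t) = ∑ c, lawOf P F c * φ c := by
  simp only [lawOf, sum_mul, ite_mul, zero_mul]
  rw [sum_comm]
  simp

lemma sum_lawOf [Fintype C] (F : T → C) : ∑ c, lawOf P F c = ∑ t, P t := by
  simpa using (sum_mul_comp_eq_sum_lawOf P F fun _ => 1).symm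

lemma sum_lawOf_prod_mk [Fintype S] (F : T → C) (g : T → S) (c : C) :
    ∑ s, lawOf P (fun u => (F u, g u)) (c, s) = lawOf P F c := by
  simp only [lawOf, Prod.mk.injEq]
  rw [sum_comm]
  refine sum_congr rfl fun u _ => ?_
  by_cases h : F u = c <;> simp [h]

variable {P}

lemma condProb_pos (hP : ∀ t, 0 ≤ P t) (F : T → C) (g : T → S) {t : T} (ht : 0 < P t) :
    0 < condProb P F g t :=
  div_pos (ht.trans_le (le_lawOf_apply hP (fun u => (F u, g u)) t))
    (ht.trans_le (le_lawOf_apply hP F t))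

lemma condEntropy_nonneg (hP : ∀ t, 0 ≤ P t) (F : T → C) (g : T → S) :
    0 ≤ condEntropy P F g := by
  refine neg_nonneg.2 (sum_nonpos fun t _ => mul_nonpos_of_nonneg_of_nonpos (hP t) ?_)
  exact log_nonpos (div_nonneg (lawOf_nonneg hP _ _) (lawOf_nonneg hP _ _))
    (div_le_one_of_le₀ (lawOf_prod_mk_le hP F g _ _) (lawOf_nonneg hP _ _))

private lemma mul_div_div_le {a b q : ℝ} (ha : 0 ≤ a) (hb : 0 ≤ b) (hq : 0 ≤ q) :
    a * (q / (a / b)) ≤ q * b := by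
  rcases ha.eq_or_lt with rfl | ha
  · simpa using mul_nonneg hq hb
  · rw [div_div_eq_mul_div, mul_div_cancel₀ _ ha.ne']

lemma sum_mul_condProb_comp_div_le [Fintype C] {C' : Type*} [DecidableEq C'] [Fintype S]
    (hP : ∀ t, 0 ≤ P t) (F : T → C) (κ : C → C') (g : T → S) :
    ∑ t, P t * (condProb P (κ ∘ F) g t / condProb P F g t) ≤ ∑ t, P t := by
  set G := fun u => (F u, g u)
  set G' := fun u => ((κ ∘ F) u, g u)
  calc ∑ t, P t * (condProb P (κ ∘ F) g t / condProb P F g t)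
      = ∑ cs : C × S, lawOf P G cs * (lawOf P G' (κ cs.1, cs.2) / lawOf P (κ ∘ F) (κ cs.1) /
          (lawOf P G cs / lawOf P F cs.1)) :=
        sum_mul_comp_eq_sum_lawOf P G fun cs => lawOf P G' (κ cs.1, cs.2) /
          lawOf P (κ ∘ F) (κ cs.1) / (lawOf P G cs / lawOf P F cs.1)
    _ ≤ ∑ cs : C × S, lawOf P G' (κ cs.1, cs.2) / lawOf P (κ ∘ F) (κ cs.1) * lawOf P F cs.1 :=
        sum_le_sum fun cs _ => mul_div_div_le (lawOf_nonneg hP _ _) (lawOf_nonneg hP _ _)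
          (div_nonneg (lawOf_nonneg hP _ _) (lawOf_nonneg hP _ _))
    _ = ∑ c, lawOf P (κ ∘ F) (κ c) / lawOf P (κ ∘ F) (κ c) * lawOf P F c := by
        simp only [Fintype.sum_prod_type, ← sum_mul, ← sum_div]
        simp only [G', sum_lawOf_prod_mk]
    _ ≤ ∑ c, lawOf P F c :=
        sum_le_sum fun c _ => mul_le_of_le_one_left (lawOf_nonneg hP _ _) (div_self_le_one _)
    _ = ∑ t, P t := sum_lawOf P F

theorem condEntropy_le_comp [Fintype C] {C' : Type*} [DecidableEq C'] [Fintype S]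
    (hP : ∀ t, 0 ≤ P t) (F : T → C) (κ : C → C') (g : T → S) :
    condEntropy P F g ≤ condEntropy P (κ ∘ F) g := by
  have gibbs : ∀ t, P t * log (condProb P (κ ∘ F) g t) ≤ P t * log (condProb P F g t) +
      (P t * (condProb P (κ ∘ F) g t / condProb P F g t) - P t) := by
    intro t
    rcases (hP t).eq_or_lt with ht | ht
    · simp [← ht]
    have hq := condProb_pos hP F g ht
    have hq' := condProb_pos hP (κ ∘ F) g ht
    have hlog := log_le_sub_one_of_pos (div_pos hq' hq)
    rw [log_div hq'.ne' hq.ne'] at hlog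
    nlinarith
  have := sum_le_sum fun t (_ : t ∈ univ) => gibbs t
  rw [sum_add_distrib, sum_sub_distrib] at this
  have := sum_mul_condProb_comp_div_le hP F κ g
  simp only [condEntropy]
  linarith

variable (P)

theorem condEntropy_const (hsum : ∑ t, P t = 1) [Fintype S] (c : C) (g : T → S) :
    condEntropy P (fun _ => c) g = entropyOf P g := by
  have hcond : ∀ t, condProb P (fun _ => c) g t = lawOf P g (g t) := by
    intro t
    simp [condProb, lawOf, hsum]
  simp only [condEntropy, hcond, sum_mul_comp_eq_sum_lawOf P g fun s => log (lawOf P g s),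
    entropyOf]

variable {P}

theorem entropyOf_le_log_card [Fintype S] (hP : ∀ t, 0 ≤ P t) (hsum : ∑ t, P t = 1)
    (g : T → S) : entropyOf P g ≤ log (Fintype.card S) := by
  have hlaw : ∑ s, lawOf P g s = 1 := (sum_lawOf P g).trans hsum
  have hS : Nonempty S := by
    by_contra h
    simp [not_nonempty_iff.1 h] at hlaw
  set n : ℝ := (Fintype.card S : ℝ)
  have hn : 0 < n := by simp [n, Fintype.card_pos]
  have gibbs : ∀ s, -(lawOf P g s * log (lawOf P g s)) ≤
      lawOf P g s * log n + (n⁻¹ - lawOf P g s) := by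
    intro s
    rcases (lawOf_nonneg hP g s).eq_or_lt with hq | hq
    · simp [← hq, hn.le]
    have hlog := log_le_sub_one_of_pos (inv_pos.2 (mul_pos hn hq))
    rw [log_inv, log_mul hn.ne' hq.ne'] at hlog
    have : lawOf P g s * (n * lawOf P g s)⁻¹ = n⁻¹ := by field_simp
    nlinarith
  have := sum_le_sum fun s (_ : s ∈ univ) => gibbs s
  rw [sum_add_distrib, sum_sub_distrib, ← sum_mul, hlaw, sum_const, card_univ, nsmul_eq_mul,
    mul_inv_cancel₀ hn.ne', sum_neg_distrib] at this
  simp only [entropyOf]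
  linarith

end Law

section Truncate

variable {α : Type*} {N : ℕ}

def truncate (k : ℕ) (a : Fin N → Option α) : Fin N → Option α :=
  fun j => if (j : ℕ) < k then a j else none

lemma truncate_truncate {k₁ k₂ : ℕ} (h : k₁ ≤ k₂) (a : Fin N → Option α) :
    truncate k₁ (truncate k₂ a) = truncate k₁ a := by
  funext j
  by_cases hj : (j : ℕ) < k₁
  · simp [truncate, hj, hj.trans_le h]
  · simp [truncate, hj]

lemma truncate_zero (a : Fin N → Option α) : truncate 0 a = fun _ => none := by
  funext j
  simp [truncate]

lemma truncate_some_eq_iff {k : ℕ} {x x' : Fin N → α} :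
    truncate k (some ∘ x) = truncate k (some ∘ x') ↔ ∀ j : Fin N, (j : ℕ) < k → x j = x' j := by
  simp only [funext_iff, truncate]
  refine forall_congr' fun j => ?_
  by_cases hj : (j : ℕ) < k <;> simp [hj]

end Truncate

lemma log_mul_div_mul {a b c d : ℝ} (ha : 0 < a) (hb : 0 < b) (hc : 0 < c) (hd : 0 < d) :
    log (a * b / (c * d)) = log a + log b - log c - log d := by
  rw [log_div (by positivity) (by positivity), log_mul ha.ne' hb.ne', log_mul hc.ne' hd.ne']
  ring

section Past

variable {X Y S : Type*} [Fintype X] [Fintype Y] [Fintype S]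
  [DecidableEq X] [DecidableEq Y] [DecidableEq S] {N : ℕ}

/-- The past `(X^k, Y^m)`, with the coordinates not yet observed set to `none`. -/
def pastObs (k m : ℕ) (t : (Fin N → X) × (Fin N → Y) × S) :
    (Fin N → Option X) × (Fin N → Option Y) :=
  (truncate k (some ∘ t.1), truncate m (some ∘ t.2.1))

omit [Fintype X] [Fintype Y] [Fintype S] [DecidableEq X] [DecidableEq Y] [DecidableEq S] in
lemma pastObs_eq_comp {k₁ m₁ k₂ m₂ : ℕ} (hk : k₁ ≤ k₂) (hm : m₁ ≤ m₂) :
    pastObs (S := S) k₁ m₁ =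
      (fun c : (Fin N → Option X) × (Fin N → Option Y) => (truncate k₁ c.1, truncate m₁ c.2)) ∘
        pastObs k₂ m₂ := by
  funext t
  simp [pastObs, truncate_truncate hk, truncate_truncate hm]

variable (P : (Fin N → X) × (Fin N → Y) × S → ℝ)

omit [DecidableEq S] in
lemma prefA_eq_lawOf (k m : ℕ) (t : (Fin N → X) × (Fin N → Y) × S) :
    prefA P k m t.1 t.2.1 = lawOf P (pastObs k m) (pastObs k m t) := by
  simp only [prefA, lawOf, pastObs, Prod.mk.injEq, truncate_some_eq_iff]

lemma prefB_eq_lawOf (k m : ℕ) (t : (Fin N → X) × (Fin N → Y) × S) :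
    prefB P k m t.1 t.2.1 t.2.2 =
      lawOf P (fun u => (pastObs k m u, u.2.2)) (pastObs k m t, t.2.2) := by
  simp only [prefB, lawOf, pastObs, Prod.mk.injEq, truncate_some_eq_iff, and_assoc]

/-- `H(S | X^k, Y^m)`. -/
noncomputable def condEntropyPast (k m : ℕ) : ℝ :=
  condEntropy P (pastObs k m) fun t => t.2.2

noncomputable def directedInfo : ℝ :=
  ∑ i : Fin N, ∑ t : (Fin N → X) × (Fin N → Y) × S,
    P t * Real.log
      (prefA P ((i : ℕ) + 1) ((i : ℕ) + 1) t.1 t.2.1 * prefA P 0 (i : ℕ) t.1 t.2.1 /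
        (prefA P ((i : ℕ) + 1) (i : ℕ) t.1 t.2.1 * prefA P 0 ((i : ℕ) + 1) t.1 t.2.1))

noncomputable def condDirectedInfo : ℝ :=
  ∑ i : Fin N, ∑ t : (Fin N → X) × (Fin N → Y) × S,
    P t * Real.log
      (prefB P ((i : ℕ) + 1) ((i : ℕ) + 1) t.1 t.2.1 t.2.2 *
          prefB P 0 (i : ℕ) t.1 t.2.1 t.2.2 /
        (prefB P ((i : ℕ) + 1) (i : ℕ) t.1 t.2.1 t.2.2 *
          prefB P 0 ((i : ℕ) + 1) t.1 t.2.1 t.2.2))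

variable {P}

lemma condEntropyPast_antitone (hP : ∀ t, 0 ≤ P t) {k₁ m₁ k₂ m₂ : ℕ} (hk : k₁ ≤ k₂)
    (hm : m₁ ≤ m₂) : condEntropyPast P k₂ m₂ ≤ condEntropyPast P k₁ m₁ := by
  rw [condEntropyPast, condEntropyPast, pastObs_eq_comp hk hm]
  exact condEntropy_le_comp hP _ _ _

lemma condEntropyPast_zero_zero (hsum : ∑ t, P t = 1) :
    condEntropyPast P 0 0 = entropyOf P fun t => t.2.2 := by
  have hconst : pastObs (X := X) (Y := Y) (S := S) (N := N) 0 0 =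
      fun _ => (fun _ => none, fun _ => none) := by
    funext t
    simp [pastObs, truncate_zero]
  rw [condEntropyPast, hconst, condEntropy_const P hsum]

lemma directedInfo_sub_condDirectedInfo (hpos : ∀ t, 0 < P t) :
    directedInfo P - condDirectedInfo P =
      ∑ i : Fin N, ((condEntropyPast P 0 i - condEntropyPast P 0 (i + 1)) -
        (condEntropyPast P (i + 1) i - condEntropyPast P (i + 1) (i + 1))) := by
  have hA : ∀ k m (t : (Fin N → X) × (Fin N → Y) × S), 0 < prefA P k m t.1 t.2.1 :=
      fun k m t => by
    rw [prefA_eq_lawOf]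
    exact (hpos t).trans_le (le_lawOf_apply (fun u => (hpos u).le) _ t)
  have hB : ∀ k m (t : (Fin N → X) × (Fin N → Y) × S), 0 < prefB P k m t.1 t.2.1 t.2.2 :=
      fun k m t => by
    rw [prefB_eq_lawOf]
    exact (hpos t).trans_le (le_lawOf_apply (fun u => (hpos u).le) _ t)
  have hcond : ∀ k m (t : (Fin N → X) × (Fin N → Y) × S),
      log (condProb P (pastObs k m) (fun t => t.2.2) t) =
        log (prefB P k m t.1 t.2.1 t.2.2) - log (prefA P k m t.1 t.2.1) := fun k m t => by
    rw [condProb, ← prefA_eq_lawOf, ← prefB_eq_lawOf, log_div (hB k m t).ne' (hA k m t).ne']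
  simp only [directedInfo, condDirectedInfo, condEntropyPast, condEntropy, ← sum_sub_distrib,
    ← sum_neg_distrib]
  refine sum_congr rfl fun i _ => sum_congr rfl fun t _ => ?_
  rw [log_mul_div_mul (hA _ _ t) (hA _ _ t) (hA _ _ t) (hA _ _ t),
    log_mul_div_mul (hB _ _ t) (hB _ _ t) (hB _ _ t) (hB _ _ t)]
  simp only [hcond]
  ring

end Past

lemma Fin.sum_univ_sub_succ {G : Type*} [AddCommGroup G] {N : ℕ} (f : ℕ → G) :
    ∑ i : Fin N, (f i - f (i + 1)) = f 0 - f N :=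
  (Fin.sum_univ_eq_sum_range (fun i => f i - f (i + 1)) N).trans (sum_range_sub' f N)

theorem directed_information_conditioning_bound_general
    {X Y S : Type*} [Fintype X] [Fintype Y] [Fintype S]
    [DecidableEq X] [DecidableEq Y] [DecidableEq S]
    (N : ℕ)
    (P : (Fin N → X) × (Fin N → Y) × S → ℝ)
    (hpos : ∀ t, 0 < P t) (hsum : ∑ t, P t = 1) :
    let DI : ℝ := ∑ i : Fin N, ∑ t : (Fin N → X) × (Fin N → Y) × S,
        P t * Real.log
          (prefA P ((i : ℕ) + 1) ((i : ℕ) + 1) t.1 t.2.1 * prefA P 0 (i : ℕ) t.1 t.2.1 /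
            (prefA P ((i : ℕ) + 1) (i : ℕ) t.1 t.2.1 * prefA P 0 ((i : ℕ) + 1) t.1 t.2.1))
    let CDI : ℝ := ∑ i : Fin N, ∑ t : (Fin N → X) × (Fin N → Y) × S,
        P t * Real.log
          (prefB P ((i : ℕ) + 1) ((i : ℕ) + 1) t.1 t.2.1 t.2.2 *
              prefB P 0 (i : ℕ) t.1 t.2.1 t.2.2 /
            (prefB P ((i : ℕ) + 1) (i : ℕ) t.1 t.2.1 t.2.2 *
              prefB P 0 ((i : ℕ) + 1) t.1 t.2.1 t.2.2))
    let HS : ℝ := -∑ s : S,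
        (∑ t : (Fin N → X) × (Fin N → Y) × S, if t.2.2 = s then P t else 0) *
          Real.log (∑ t : (Fin N → X) × (Fin N → Y) × S, if t.2.2 = s then P t else 0)
    |DI - CDI| ≤ HS ∧ HS ≤ Real.log (Fintype.card S) := by
  show |directedInfo P - condDirectedInfo P| ≤ entropyOf P (fun t => t.2.2) ∧
    entropyOf P (fun t => t.2.2) ≤ log (Fintype.card S)
  have hP : ∀ t, 0 ≤ P t := fun t => (hpos t).le
  rw [directedInfo_sub_condDirectedInfo hpos, sum_sub_distrib,
    ← condEntropyPast_zero_zero hsum]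
  refine ⟨?_, condEntropyPast_zero_zero hsum ▸ entropyOf_le_log_card hP hsum _⟩
  set H := condEntropyPast P
  have hanti : ∀ {k₁ m₁ k₂ m₂}, k₁ ≤ k₂ → m₁ ≤ m₂ → H k₂ m₂ ≤ H k₁ m₁ :=
    condEntropyPast_antitone hP
  have hY := Fin.sum_univ_sub_succ (N := N) fun n => H 0 n
  have hlow : 0 ≤ ∑ i : Fin N, (H (i + 1) i - H (i + 1) (i + 1)) :=
    sum_nonneg fun i _ => sub_nonneg.2 (hanti le_rfl (Nat.le_succ _))
  have hhigh : ∑ i : Fin N, (H (i + 1) i - H (i + 1) (i + 1)) ≤ H 0 0 - H N N := by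
    rw [← Fin.sum_univ_sub_succ fun n => H n n]
    exact sum_le_sum fun i _ => sub_le_sub_right (hanti (Nat.le_succ _) le_rfl) _
  have hY0 : H 0 N ≤ H 0 0 := hanti le_rfl (Nat.zero_le N)
  have h0N : 0 ≤ H 0 N := condEntropy_nonneg hP _ _
  have hNN : 0 ≤ H N N := condEntropy_nonneg hP _ _
  exact abs_le.2 ⟨by linarith, by linarith⟩

/-- Conditioning perturbation bound for directed information:
`|I(X^N → Y^N) − I(X^N → Y^N | S)| ≤ H(S) ≤ log |𝒮|`, where the (conditional)
directed informations are sums of (conditional) mutual informations and `H(S)` is the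
Shannon entropy of `S` (natural logarithm); the joint pmf is assumed positive. -/
theorem directed_information_conditioning_bound
    {X Y S : Type*} [Fintype X] [Fintype Y] [Fintype S]
    [DecidableEq X] [DecidableEq Y] [DecidableEq S]
    (N : ℕ) (hN : 0 < N)
    (P : (Fin N → X) × (Fin N → Y) × S → ℝ)
    (hpos : ∀ t, 0 < P t) (hsum : ∑ t, P t = 1) :
    let DI : ℝ := ∑ i : Fin N, ∑ t : (Fin N → X) × (Fin N → Y) × S,
        P t * Real.log
          (prefA P ((i : ℕ) + 1) ((i : ℕ) + 1) t.1 t.2.1 * prefA P 0 (i : ℕ) t.1 t.2.1 /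
            (prefA P ((i : ℕ) + 1) (i : ℕ) t.1 t.2.1 * prefA P 0 ((i : ℕ) + 1) t.1 t.2.1))
    let CDI : ℝ := ∑ i : Fin N, ∑ t : (Fin N → X) × (Fin N → Y) × S,
        P t * Real.log
          (prefB P ((i : ℕ) + 1) ((i : ℕ) + 1) t.1 t.2.1 t.2.2 *
              prefB P 0 (i : ℕ) t.1 t.2.1 t.2.2 /
            (prefB P ((i : ℕ) + 1) (i : ℕ) t.1 t.2.1 t.2.2 *
              prefB P 0 ((i : ℕ) + 1) t.1 t.2.1 t.2.2))
    let HS : ℝ := -∑ s : S,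
        (∑ t : (Fin N → X) × (Fin N → Y) × S, if t.2.2 = s then P t else 0) *
          Real.log (∑ t : (Fin N → X) × (Fin N → Y) × S, if t.2.2 = s then P t else 0)
    |DI - CDI| ≤ HS ∧ HS ≤ Real.log (Fintype.card S) :=
  directed_information_conditioning_bound_general N P hpos hsum
end

section
/- Random-coding positive exponent: if R < I(X;Y) (mutual information under joint pmf Q(x)W(y|x)) then there exists ρ* ∈ (0, 1] such that E₀(ρ*, Q, W) − ρ* R > 0, where E₀ is the Gallager function. -/
open Finset

/-- The Gallager function (natural logarithm). -/
noncomputable def gallagerE0 {X Y : Type*} [Fintype X] [Fintype Y]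
    (Q : X → ℝ) (W : X → Y → ℝ) (ρ : ℝ) : ℝ :=
  -Real.log (∑ y : Y, (∑ x : X, Q x * W x y ^ (1 / (1 + ρ))) ^ (1 + ρ))

/-- Mutual information `I(X;Y)` under the joint pmf `Q(x)W(y|x)` (natural logarithm). -/
noncomputable def mutInfo {X Y : Type*} [Fintype X] [Fintype Y]
    (Q : X → ℝ) (W : X → Y → ℝ) : ℝ :=
  ∑ x : X, ∑ y : Y, Q x * W x y * Real.log (W x y / ∑ x' : X, Q x' * W x' y)

/-! `E₀(0) = 0` and `E₀'(0) = I(X;Y) > R`, so `ρ ↦ E₀(ρ) − ρR` vanishes at `0` with positive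
slope and is therefore positive for small `ρ > 0`. The derivative is computed term by term in `y`:
at `ρ = 0`, `d/dρ (∑ₓ q a^{1/(1+ρ)})^{1+ρ} = S log S − ∑ₓ q a log a` with `S = ∑ₓ q a`. -/

open Real Filter Topology

theorem HasDerivAt.exists_mem_Ioc_lt_add {f : ℝ → ℝ} {f' x ε : ℝ} (hf : HasDerivAt f f' x)
    (hf' : 0 < f') (hε : 0 < ε) : ∃ t ∈ Set.Ioc 0 ε, f x < f (x + t) := by
  have hslope : ∀ᶠ t in 𝓝[>] 0, 0 < t⁻¹ • (f (x + t) - f x) :=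
    hf.tendsto_slope_zero_right.eventually (eventually_gt_nhds hf')
  obtain ⟨t, hslope_t, ht⟩ := (hslope.and (Ioc_mem_nhdsGT hε)).exists
  exact ⟨t, ht, sub_pos.1 ((mul_pos_iff_of_pos_left (inv_pos.2 ht.1)).1 hslope_t)⟩

theorem hasDerivAt_rpow_one_div_one_add {a : ℝ} (ha : 0 < a) :
    HasDerivAt (fun ρ : ℝ => a ^ (1 / (1 + ρ))) (-(a * log a)) 0 := by
  have h : HasDerivAt (fun ρ : ℝ => 1 / (1 + ρ)) (-1) 0 := by
    simpa using ((hasDerivAt_id (0 : ℝ)).const_add 1).fun_inv (by norm_num)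
  simpa [mul_comm] using h.const_rpow ha

theorem hasDerivAt_sum_rpow_one_div_one_add_rpow {ι : Type*} [Fintype ι] {q a : ι → ℝ}
    (ha : ∀ i, 0 < a i) (hS : 0 < ∑ i, q i * a i) :
    HasDerivAt (fun ρ : ℝ => (∑ i, q i * a i ^ (1 / (1 + ρ))) ^ (1 + ρ))
      ((∑ i, q i * a i) * log (∑ i, q i * a i) - ∑ i, q i * (a i * log (a i))) 0 := by
  have hinner : HasDerivAt (fun ρ : ℝ => ∑ i, q i * a i ^ (1 / (1 + ρ)))
      (-∑ i, q i * (a i * log (a i))) 0 := by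
    simpa using HasDerivAt.fun_sum fun i _ =>
      (hasDerivAt_rpow_one_div_one_add (ha i)).const_mul (q i)
  have hinner0 : ∑ i, q i * a i ^ (1 / (1 + (0 : ℝ))) = ∑ i, q i * a i := by simp
  convert hinner.rpow ((hasDerivAt_id' (0 : ℝ)).const_add 1) (by rwa [hinner0]) using 1
  rw [hinner0]
  simp only [add_zero, sub_self, rpow_zero, rpow_one, mul_one, one_mul]
  ring

section Channel

variable {X Y : Type*} [Fintype X] {Q : X → ℝ} {W : X → Y → ℝ}

variable (Q W) in
noncomputable def outputDistribution (y : Y) : ℝ :=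
  ∑ x, Q x * W x y

theorem outputDistribution_pos (hQ : ∀ x, 0 ≤ Q x) (hQsum : ∑ x, Q x = 1)
    (hW : ∀ x y, 0 < W x y) (y : Y) : 0 < outputDistribution Q W y := by
  obtain ⟨x₀, -, hx₀⟩ : ∃ x ∈ univ, (0 : ℝ) < Q x :=
    exists_lt_of_sum_lt (by simp [hQsum])
  exact sum_pos' (fun x _ => mul_nonneg (hQ x) (hW x y).le)
    ⟨x₀, mem_univ _, mul_pos hx₀ (hW x₀ y)⟩

variable [Fintype Y]

theorem sum_outputDistribution (hQsum : ∑ x, Q x = 1) (hWsum : ∀ x, ∑ y, W x y = 1) :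
    ∑ y, outputDistribution Q W y = 1 := by
  simp only [outputDistribution]
  rw [sum_comm]
  simp only [← mul_sum, hWsum, mul_one, hQsum]

variable (Q W) in
theorem gallagerE0_zero : gallagerE0 Q W 0 = -log (∑ y, outputDistribution Q W y) := by
  simp [gallagerE0, outputDistribution]

theorem mutInfo_eq_sum_sub (hP : ∀ y, outputDistribution Q W y ≠ 0) :
    mutInfo Q W = ∑ y, (∑ x, Q x * (W x y * log (W x y))
      - outputDistribution Q W y * log (outputDistribution Q W y)) := by
  change ∑ x, ∑ y, Q x * W x y * log (W x y / outputDistribution Q W y) = _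
  rw [sum_comm]
  refine sum_congr rfl fun y _ => ?_
  have hterm : ∀ x, Q x * W x y * log (W x y / outputDistribution Q W y)
      = Q x * (W x y * log (W x y)) - Q x * W x y * log (outputDistribution Q W y) := by
    intro x
    rcases eq_or_ne (W x y) 0 with h | h
    · simp [h]
    · rw [log_div h (hP y)]; ring
  rw [sum_congr rfl fun x _ => hterm x, sum_sub_distrib, ← sum_mul]
  rfl

theorem hasDerivAt_gallagerE0_zero (hQ : ∀ x, 0 ≤ Q x) (hQsum : ∑ x, Q x = 1)
    (hW : ∀ x y, 0 < W x y) (hWsum : ∀ x, ∑ y, W x y = 1) :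
    HasDerivAt (gallagerE0 Q W) (mutInfo Q W) 0 := by
  have hP := outputDistribution_pos hQ hQsum hW
  have hsum : HasDerivAt (fun ρ : ℝ => ∑ y, (∑ x, Q x * W x y ^ (1 / (1 + ρ))) ^ (1 + ρ))
      (∑ y, (outputDistribution Q W y * log (outputDistribution Q W y)
        - ∑ x, Q x * (W x y * log (W x y)))) 0 :=
    HasDerivAt.fun_sum fun y _ => hasDerivAt_sum_rpow_one_div_one_add_rpow (hW · y) (hP y)
  have hsum0 : ∑ y, (∑ x, Q x * W x y ^ (1 / (1 + (0 : ℝ)))) ^ (1 + (0 : ℝ)) = 1 := by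
    simpa [outputDistribution] using sum_outputDistribution hQsum hWsum
  refine (hsum.log (by rw [hsum0]; exact one_ne_zero)).neg.congr_deriv ?_
  rw [hsum0, mutInfo_eq_sum_sub (fun y => (hP y).ne'), div_one, ← sum_neg_distrib]
  simp only [neg_sub]

end Channel

/-- Random-coding positive exponent: if `R < I(X;Y)` then there is `ρ* ∈ (0,1]` with
`E₀(ρ*, Q, W) − ρ*·R > 0`. -/
theorem exists_positive_exponent {X Y : Type*} [Fintype X] [Fintype Y]
    (Q : X → ℝ) (hQ : ∀ x, 0 ≤ Q x) (hQsum : ∑ x, Q x = 1)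
    (W : X → Y → ℝ) (hW : ∀ x y, 0 < W x y) (hWsum : ∀ x, ∑ y, W x y = 1)
    (R : ℝ) (hR : R < mutInfo Q W) :
    ∃ ρ : ℝ, 0 < ρ ∧ ρ ≤ 1 ∧ 0 < gallagerE0 Q W ρ - ρ * R := by
  have hderiv : HasDerivAt (fun ρ => gallagerE0 Q W ρ - ρ * R) (mutInfo Q W - 1 * R) 0 :=
    (hasDerivAt_gallagerE0_zero hQ hQsum hW hWsum).sub ((hasDerivAt_id' 0).mul_const R)
  obtain ⟨ρ, ⟨hρ0, hρ1⟩, hpos⟩ := hderiv.exists_mem_Ioc_lt_add (by linarith) one_pos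
  refine ⟨ρ, hρ0, hρ1, ?_⟩
  simpa [gallagerE0_zero, sum_outputDistribution hQsum hWsum] using hpos
end
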